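/- arXiv:math/0311447 — 2 statements merged into one kernel-verified Lean document; each statement's English description precedes it below -/
import Mathlib

section
/- Let d, m_1, m_2, m_3, m_4 be natural numbers with m_i ≤ d for all i, 2d ≥ m_i + m_j + m_l for every three-element subset {i,j,l} ⊆ {1,2,3,4}, and 2d < m_1 + m_2 + m_3 + m_4. Set t_{ij} = m_i + m_j − d for 1 ≤ i < j ≤ 4. Then Σ_{1 ≤ i < j ≤ 4, t_{ij} ≥ 2} C(1 + t_{ij}, 3) − Σ_{1 ≤ i < j ≤ 4, t_{ij} ≤ −2} C(1 − t_{ij}, 3) ≥ 0. Equivalently, if the cubic Cremona transformation based at the four points strictly decreases the degree of the system L_3(d, m_1, …, m_4), then the virtual dimension of the transformed system is greater than or equal to the virtual dimension of the original system. -/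
/-!
Each summand equals `(t³ - t) / 6`, and `Σ_{i<j} (t_{ij}³ - t_{ij})` is also six times the
change of virtual dimension under the Cremona transformation, so both claims reduce to the
nonnegativity of this sum. Pairing complementary index pairs,
`t_{ij} + t_{kl} = Σ mᵢ - 2d ≥ 1`, and `a³ - a + b³ - b = (a + b)(a² - ab + b² - 1) ≥ 0`
whenever `a + b ≥ 1`, since then `4(a² - ab + b²) ≥ (a + b)² ≥ 1`.
-/

def intChoose3 (n : ℤ) : ℤ := n * (n - 1) * (n - 2) / 6

open Finset

theorem six_dvd_mul_sub_one_mul_sub_two (n : ℤ) : (6 : ℤ) ∣ n * (n - 1) * (n - 2) := by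
  have h : ((n * (n - 1) * (n - 2) : ℤ) : ZMod 6) = 0 := by
    push_cast
    generalize (n : ZMod 6) = x
    revert x
    decide
  exact (ZMod.intCast_zmod_eq_zero_iff_dvd _ 6).mp h

theorem six_mul_intChoose3 (n : ℤ) : 6 * intChoose3 n = n * (n - 1) * (n - 2) :=
  Int.mul_ediv_cancel' (six_dvd_mul_sub_one_mul_sub_two n)

theorem six_mul_ite_intChoose3_sub_ite_intChoose3 (t : ℤ) :
    6 * ((if 2 ≤ t then intChoose3 (1 + t) else 0) -
      (if t ≤ -2 then intChoose3 (1 - t) else 0)) = t ^ 3 - t := by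
  rcases le_or_gt 2 t with h | h
  · rw [if_pos h, if_neg (by omega), sub_zero, six_mul_intChoose3]
    ring
  rcases le_or_gt t (-2) with h' | h'
  · rw [if_neg (by omega), if_pos h', zero_sub, mul_neg, six_mul_intChoose3]
    ring
  · rw [if_neg (by omega), if_neg (by omega)]
    interval_cases t <;> norm_num

theorem cube_sub_self_add_cube_sub_self_nonneg {a b : ℤ} (h : 1 ≤ a + b) :
    0 ≤ a ^ 3 - a + (b ^ 3 - b) := by
  have hq : 1 ≤ a ^ 2 - a * b + b ^ 2 := by
    have : 1 ≤ 4 * (a ^ 2 - a * b + b ^ 2) := by nlinarith [sq_nonneg (a - b)]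
    omega
  have hfactor : a ^ 3 - a + (b ^ 3 - b) = (a + b) * (a ^ 2 - a * b + b ^ 2 - 1) := by ring
  rw [hfactor]
  exact mul_nonneg (by omega) (by omega)

theorem sum_filter_lt_fin_four {M : Type*} [AddCommMonoid M] (f : Fin 4 → Fin 4 → M) :
    ∑ p ∈ univ.filter (fun p : Fin 4 × Fin 4 => p.1 < p.2), f p.1 p.2 =
      f 0 1 + f 0 2 + f 0 3 + f 1 2 + f 1 3 + f 2 3 := by
  rw [sum_filter, Fintype.sum_prod_type]
  simp only [Fin.sum_univ_four]
  simp
  abel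

theorem sum_filter_lt_cube_sub_self_nonneg (d : ℤ) (m : Fin 4 → ℤ) (h : 2 * d < ∑ i, m i) :
    0 ≤ ∑ p ∈ univ.filter (fun p : Fin 4 × Fin 4 => p.1 < p.2),
      ((m p.1 + m p.2 - d) ^ 3 - (m p.1 + m p.2 - d)) := by
  rw [Fin.sum_univ_four] at h
  rw [sum_filter_lt_fin_four fun i j => (m i + m j - d) ^ 3 - (m i + m j - d)]
  have h01 := cube_sub_self_add_cube_sub_self_nonneg (a := m 0 + m 1 - d) (b := m 2 + m 3 - d)
    (by linarith)
  have h02 := cube_sub_self_add_cube_sub_self_nonneg (a := m 0 + m 2 - d) (b := m 1 + m 3 - d)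
    (by linarith)
  have h03 := cube_sub_self_add_cube_sub_self_nonneg (a := m 0 + m 3 - d) (b := m 1 + m 2 - d)
    (by linarith)
  linarith

def virtualDim {ι : Type*} [Fintype ι] (d : ℤ) (m : ι → ℤ) : ℤ :=
  intChoose3 (d + 3) - ∑ i, intChoose3 (m i + 2) - 1

theorem six_mul_virtualDim {ι : Type*} [Fintype ι] (d : ℤ) (m : ι → ℤ) :
    6 * virtualDim d m = (d + 3) * (d + 2) * (d + 1) - ∑ i, (m i + 2) * (m i + 1) * m i - 6 := by
  simp only [virtualDim, mul_sub, mul_sum, six_mul_intChoose3]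
  ring_nf

theorem six_mul_virtualDim_cremona_sub (d k : ℤ) (m : Fin 4 → ℤ) (hk : k = 2 * d - ∑ i, m i) :
    6 * (virtualDim (d + k) (fun i => m i + k) - virtualDim d m) =
      ∑ p ∈ univ.filter (fun p : Fin 4 × Fin 4 => p.1 < p.2),
        ((m p.1 + m p.2 - d) ^ 3 - (m p.1 + m p.2 - d)) := by
  rw [mul_sub, six_mul_virtualDim, six_mul_virtualDim,
    sum_filter_lt_fin_four fun i j => (m i + m j - d) ^ 3 - (m i + m j - d)]
  simp only [Fin.sum_univ_four] at hk ⊢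
  subst hk
  ring

theorem cremona_decreasing_degree_nonneg_general
    (d : ℕ) (m : Fin 4 → ℕ)
    (hdec : 2 * (d : ℤ) < ∑ i, (m i : ℤ)) :
    let t : Fin 4 → Fin 4 → ℤ := fun i j => (m i : ℤ) + m j - d
    let k : ℤ := 2 * d - ∑ i, (m i : ℤ)
    let v : ℤ := intChoose3 ((d : ℤ) + 3) - ∑ i, intChoose3 ((m i : ℤ) + 2) - 1
    let v' : ℤ := intChoose3 ((d : ℤ) + k + 3) - ∑ i, intChoose3 ((m i : ℤ) + k + 2) - 1
    0 ≤ ∑ p ∈ Finset.univ.filter (fun p : Fin 4 × Fin 4 => p.1 < p.2),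
        ((if 2 ≤ t p.1 p.2 then intChoose3 (1 + t p.1 p.2) else 0) -
          (if t p.1 p.2 ≤ -2 then intChoose3 (1 - t p.1 p.2) else 0)) ∧
      v ≤ v' := by
  intro t k v v'
  have hcubes := sum_filter_lt_cube_sub_self_nonneg d (fun i => m i) hdec
  have hsum : 6 * ∑ p ∈ univ.filter (fun p : Fin 4 × Fin 4 => p.1 < p.2),
      ((if 2 ≤ t p.1 p.2 then intChoose3 (1 + t p.1 p.2) else 0) -
        (if t p.1 p.2 ≤ -2 then intChoose3 (1 - t p.1 p.2) else 0)) =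
      ∑ p ∈ univ.filter (fun p : Fin 4 × Fin 4 => p.1 < p.2), (t p.1 p.2 ^ 3 - t p.1 p.2) := by
    rw [mul_sum]
    exact sum_congr rfl fun p _ => six_mul_ite_intChoose3_sub_ite_intChoose3 (t p.1 p.2)
  have hdim : 6 * (v' - v) = _ := six_mul_virtualDim_cremona_sub d k (fun i => m i) rfl
  exact ⟨by linarith, by linarith⟩

/-- If the cubic Cremona transformation based at the four points strictly decreases the
degree of `L_3(d, m_1, …, m_4)` (i.e. `2d < m_1 + m_2 + m_3 + m_4`), then
`∑_{t_{ij} ≥ 2} C(1+t_{ij},3) - ∑_{t_{ij} ≤ -2} C(1-t_{ij},3) ≥ 0`; equivalently the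
virtual dimension of the transformed system is at least that of the original one. -/
theorem cremona_decreasing_degree_nonneg
    (d : ℕ) (m : Fin 4 → ℕ)
    (hm : ∀ i, m i ≤ d)
    (h3 : ∀ i j l : Fin 4, i ≠ j → i ≠ l → j ≠ l → (m i : ℤ) + m j + m l ≤ 2 * d)
    (hdec : 2 * (d : ℤ) < ∑ i, (m i : ℤ)) :
    let t : Fin 4 → Fin 4 → ℤ := fun i j => (m i : ℤ) + m j - d
    let k : ℤ := 2 * d - ∑ i, (m i : ℤ)
    let v : ℤ := intChoose3 ((d : ℤ) + 3) - ∑ i, intChoose3 ((m i : ℤ) + 2) - 1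
    let v' : ℤ := intChoose3 ((d : ℤ) + k + 3) - ∑ i, intChoose3 ((m i : ℤ) + k + 2) - 1
    0 ≤ ∑ p ∈ Finset.univ.filter (fun p : Fin 4 × Fin 4 => p.1 < p.2),
        ((if 2 ≤ t p.1 p.2 then intChoose3 (1 + t p.1 p.2) else 0) -
          (if t p.1 p.2 ≤ -2 then intChoose3 (1 - t p.1 p.2) else 0)) ∧
      v ≤ v' :=
  cremona_decreasing_degree_nonneg_general d m hdec
end

section
/- Let k be a field and let a, b, m be natural numbers with m ≤ a and m ≤ b. The k-vector space of bihomogeneous polynomials of bidegree (a, b) in k[x_0, x_1; y_0, y_1] such that every monomial x_0^{a−i} x_1^{i} y_0^{b−j} y_1^{j} occurring with nonzero coefficient satisfies i + j ≥ m (multiplicity at least m at the point ([1:0],[1:0])) is k-linearly isomorphic to the k-vector space of homogeneous polynomials of degree a + b − m in k[z_0, z_1, z_2] such that every monomial z_0^{α} z_1^{β} z_2^{γ} occurring with nonzero coefficient satisfies β + γ ≥ b − m and α + γ ≥ a − m (multiplicity at least b − m at [1:0:0] and at least a − m at [0:1:0]). An isomorphism is induced by the bijection (i, j) ↦ (α,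 β, γ) = (a − i, b − j, i + j − m) on the corresponding monomial bases. In particular the two spaces have the same dimension. -/
/-!
Both spaces are spanned by the monomials they contain, so it suffices to match their exponent
sets: `(a - i, i, b - j, j) ↦ (a - i, b - j, i + j - m)` is a bijection from the exponents of
`quadricSys` onto those of `planeSys`, with inverse `(α, β, γ) ↦ (α, a - α, β, b - β)`, and
relabelling the coefficients of a polynomial along it is the required linear isomorphism.
-/

open MvPolynomial

/-- The `k`-subspace of `MvPolynomial σ k` of polynomials whose support is contained
in a given set `S` of exponents. -/
def suppSubmodule (k : Type*) [Field k] (σ : Type*) [DecidableEq σ] (S : Set (σ →₀ ℕ)) :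
    Submodule k (MvPolynomial σ k) where
  carrier := {f | ∀ a ∈ f.support, a ∈ S}
  zero_mem' := by intro a ha; simp at ha
  add_mem' := by
    intro f g hf hg a ha
    rcases Finset.mem_union.mp (MvPolynomial.support_add ha) with h | h
    · exact hf a h
    · exact hg a h
  smul_mem' := by
    intro c f hf a ha
    exact hf a (MvPolynomial.support_smul ha)

/-- Bihomogeneous polynomials of bidegree `(a,b)` in `k[x_0,x_1;y_0,y_1]` (variables
`0,1` are `x_0,x_1` and variables `2,3` are `y_0,y_1`) with multiplicity at least `m` at
the point `([1:0],[1:0])`: every exponent `(a-i, i, b-j, j)` occurring satisfies `i+j ≥ m`. -/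
def quadricSys (k : Type*) [Field k] (a b m : ℕ) : Submodule k (MvPolynomial (Fin 4) k) :=
  suppSubmodule k (Fin 4) {e | e 0 + e 1 = a ∧ e 2 + e 3 = b ∧ m ≤ e 1 + e 3}

/-- Homogeneous polynomials of degree `a+b-m` in `k[z_0,z_1,z_2]` with multiplicity at
least `b-m` at `[1:0:0]` and at least `a-m` at `[0:1:0]`. -/
def planeSys (k : Type*) [Field k] (a b m : ℕ) : Submodule k (MvPolynomial (Fin 3) k) :=
  suppSubmodule k (Fin 3) {e | e 0 + e 1 + e 2 = a + b - m ∧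
    b - m ≤ e 1 + e 2 ∧ a - m ≤ e 0 + e 2}

section SuppSubmodule

variable {k : Type*} [Field k] {σ τ : Type*} [DecidableEq σ] [DecidableEq τ]
  {S : Set (σ →₀ ℕ)} {T : Set (τ →₀ ℕ)} {φ : (σ →₀ ℕ) → τ →₀ ℕ} {ψ : (τ →₀ ℕ) → σ →₀ ℕ}

theorem mapDomain_mem_suppSubmodule (hφ : Set.MapsTo φ S T) {f : MvPolynomial σ k}
    (hf : f ∈ suppSubmodule k σ S) : AddMonoidAlgebra.mapDomain φ f ∈ suppSubmodule k τ T := by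
  intro d hd
  obtain ⟨e, he, rfl⟩ := Finset.mem_image.mp (Finsupp.mapDomain_support hd)
  exact hφ (hf e he)

variable (k) in
noncomputable def suppSubmoduleMap (hφ : Set.MapsTo φ S T) :
    suppSubmodule k σ S →ₗ[k] suppSubmodule k τ T :=
  ((AddMonoidAlgebra.mapDomainLinearMap k k φ).comp (suppSubmodule k σ S).subtype).codRestrict
    _ fun f => mapDomain_mem_suppSubmodule hφ f.2

theorem coeff_suppSubmoduleMap (hφ : Set.MapsTo φ S T) (hinj : Set.InjOn φ S)
    (f : suppSubmodule k σ S) {e : σ →₀ ℕ} (he : e ∈ S) :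
    coeff (φ e) (suppSubmoduleMap k hφ f : MvPolynomial τ k) = coeff e (f : MvPolynomial σ k) :=
  Finsupp.mapDomain_apply' S _ (fun _ hd => f.2 _ hd) hinj he

theorem suppSubmoduleMap_comp (hφ : Set.MapsTo φ S T) (hψ : Set.MapsTo ψ T S)
    (h : Set.LeftInvOn ψ φ S) : suppSubmoduleMap k hψ ∘ₗ suppSubmoduleMap k hφ = LinearMap.id := by
  refine LinearMap.ext fun f => Subtype.ext <| AddMonoidAlgebra.coeff_injective ?_
  change Finsupp.mapDomain ψ (Finsupp.mapDomain φ (AddMonoidAlgebra.coeff (f : MvPolynomial σ k))) =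
    AddMonoidAlgebra.coeff (f : MvPolynomial σ k)
  rw [← Finsupp.mapDomain_comp,
    Finsupp.mapDomain_congr (f := ψ ∘ φ) (g := id) fun e he => h (f.2 e he), Finsupp.mapDomain_id]

variable (k) in
noncomputable def suppSubmoduleCongr (hφ : Set.MapsTo φ S T) (hψ : Set.MapsTo ψ T S)
    (h : Set.InvOn ψ φ S T) : suppSubmodule k σ S ≃ₗ[k] suppSubmodule k τ T :=
  LinearEquiv.ofLinearMap (suppSubmoduleMap k hφ) (suppSubmoduleMap k hψ)
    (suppSubmoduleMap_comp hψ hφ h.2) (suppSubmoduleMap_comp hφ hψ h.1)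

theorem coeff_suppSubmoduleCongr (hφ : Set.MapsTo φ S T) (hψ : Set.MapsTo ψ T S)
    (h : Set.InvOn ψ φ S T) (f : suppSubmodule k σ S) {e : σ →₀ ℕ} (he : e ∈ S) :
    coeff (φ e) (suppSubmoduleCongr k hφ hψ h f : MvPolynomial τ k) =
      coeff e (f : MvPolynomial σ k) :=
  coeff_suppSubmoduleMap hφ h.1.injOn f he

end SuppSubmodule

def quadricExponents (a b m : ℕ) : Set (Fin 4 →₀ ℕ) :=
  {e | e 0 + e 1 = a ∧ e 2 + e 3 = b ∧ m ≤ e 1 + e 3}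

def planeExponents (a b m : ℕ) : Set (Fin 3 →₀ ℕ) :=
  {e | e 0 + e 1 + e 2 = a + b - m ∧ b - m ≤ e 1 + e 2 ∧ a - m ≤ e 0 + e 2}

noncomputable def quadricToPlaneExponent (m : ℕ) (e : Fin 4 →₀ ℕ) : Fin 3 →₀ ℕ :=
  Finsupp.equivFunOnFinite.symm ![e 0, e 2, e 1 + e 3 - m]

noncomputable def planeToQuadricExponent (a b : ℕ) (e : Fin 3 →₀ ℕ) : Fin 4 →₀ ℕ :=
  Finsupp.equivFunOnFinite.symm ![e 0, a - e 0, e 1, b - e 1]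

section Exponents

variable {a b m : ℕ}

theorem mapsTo_quadricToPlaneExponent :
    Set.MapsTo (quadricToPlaneExponent m) (quadricExponents a b m) (planeExponents a b m) := by
  rintro e ⟨hx, hy, hmult⟩
  simp [planeExponents, quadricToPlaneExponent]
  omega

theorem mapsTo_planeToQuadricExponent (hma : m ≤ a) (hmb : m ≤ b) :
    Set.MapsTo (planeToQuadricExponent a b) (planeExponents a b m) (quadricExponents a b m) := by
  rintro e ⟨hdeg, hmult₁, hmult₂⟩
  simp [quadricExponents, planeToQuadricExponent]
  omega

theorem invOn_planeToQuadricExponent (hma : m ≤ a) (hmb : m ≤ b) :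
    Set.InvOn (planeToQuadricExponent a b) (quadricToPlaneExponent m)
      (quadricExponents a b m) (planeExponents a b m) := by
  constructor
  · rintro e ⟨hx, hy, hmult⟩
    ext i
    fin_cases i <;> simp [planeToQuadricExponent, quadricToPlaneExponent] <;> omega
  · rintro e ⟨hdeg, hmult₁, hmult₂⟩
    ext i
    fin_cases i <;> simp [planeToQuadricExponent, quadricToPlaneExponent]
    omega

theorem quadricToPlaneExponent_monomial (i j : ℕ) :
    quadricToPlaneExponent m (Finsupp.equivFunOnFinite.symm ![a - i, i, b - j, j]) =
      Finsupp.equivFunOnFinite.symm ![a - i, b - j, i + j - m] := by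
  simp [quadricToPlaneExponent]

end Exponents

/-- The correspondence `L_Q(a,b,m) ↔ L_2(a+b-m, b-m, a-m)`: there is a `k`-linear
isomorphism between the two spaces, induced on monomial bases by the bijection
`x_0^{a-i} x_1^i y_0^{b-j} y_1^j ↦ z_0^{a-i} z_1^{b-j} z_2^{i+j-m}`. In particular the
two spaces have the same dimension. -/
theorem quadric_to_plane_isomorphism
    (k : Type*) [Field k] (a b m : ℕ) (hma : m ≤ a) (hmb : m ≤ b) :
    (∃ e : quadricSys k a b m ≃ₗ[k] planeSys k a b m,
      ∀ (f : quadricSys k a b m) (i j : ℕ), i ≤ a → j ≤ b → m ≤ i + j →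
        MvPolynomial.coeff (Finsupp.equivFunOnFinite.symm ![a - i, b - j, i + j - m])
            (e f : MvPolynomial (Fin 3) k) =
          MvPolynomial.coeff (Finsupp.equivFunOnFinite.symm ![a - i, i, b - j, j])
            (f : MvPolynomial (Fin 4) k)) ∧
    Module.rank k (quadricSys k a b m) = Module.rank k (planeSys k a b m) := by
  let E : quadricSys k a b m ≃ₗ[k] planeSys k a b m :=
    suppSubmoduleCongr k mapsTo_quadricToPlaneExponent (mapsTo_planeToQuadricExponent hma hmb)
      (invOn_planeToQuadricExponent hma hmb)
  refine ⟨⟨E, fun f i j hia hjb hmij => ?_⟩, E.rank_eq⟩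
  have hmem : Finsupp.equivFunOnFinite.symm ![a - i, i, b - j, j] ∈ quadricExponents a b m := by
    simp [quadricExponents]
    omega
  rw [← quadricToPlaneExponent_monomial]
  exact coeff_suppSubmoduleCongr _ _ _ f hmem
end
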